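/- arXiv:1504.08338 — 4 statements merged into one kernel-verified Lean document; each statement's English description precedes it below -/
import Mathlib

section
/- For every real number q > 0, f_q(0, δ(q)) = 0; that is, the function f_q vanishes at the point corresponding to the trivial representation of the fusion algebra of (G₂)_q. -/
/-- The loop value δ(q) of the trivalent category (G₂)_q. -/
noncomputable def G2del (q : ℝ) : ℝ :=
  q ^ 10 + q ^ 8 + q ^ 2 + 1 + 1 / q ^ 2 + 1 / q ^ 8 + 1 / q ^ 10

/-- The triangle coefficient c(q) of (G₂)_q. -/
noncomputable def G2c (q : ℝ) : ℝ :=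
  -((q ^ 2 - 1 + 1 / q ^ 2) / (q ^ 4 + 1 / q ^ 4))

/-- The square root ξ(q) appearing in the minimal idempotents of Mor(2,2) of (G₂)_q. -/
noncomputable def G2xi (q : ℝ) : ℝ :=
  (1 + q ^ 2) ^ 2 * (1 - q ^ 2 + q ^ 6 - q ^ 8 + q ^ 10 - q ^ 14 + q ^ 16) /
    (q ^ 6 * (1 + q ^ 8))

/-- The function f_q(α,t) = γ_{α,t}(s♯·s) built from the minimal idempotent y₋. -/
noncomputable def G2f (q α t : ℝ) : ℝ :=
  G2del q * (-(G2del q + 1) * (G2c q) ^ 2 - G2xi q + 1) / (-2 * G2xi q)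
    + t ^ 2 * (G2del q * ((G2c q) ^ 2 - 2 * G2c q - 2) + G2xi q + (G2c q) ^ 2
        - 2 * G2c q - 1) / (-2 * G2del q * G2xi q)
    - α * (G2del q * (G2c q + 2) * G2c q - G2xi q + (G2c q) ^ 2 + 1) / (-2 * G2xi q)
    + t * (G2del q * G2c q + G2del q + G2c q) / (-G2xi q)

theorem G2del_pos (q : ℝ) : 0 < G2del q := by
  unfold G2del
  positivity

theorem G2_f_trivial_point_general (q : ℝ) : G2f q 0 (G2del q) = 0 := by
  have hδ : G2del q ≠ 0 := (G2del_pos q).ne'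
  unfold G2f
  -- At (0, δ) the terms without α combine to δ/(-2ξ) times an expression that vanishes
  -- identically in c and ξ; only the t²/δ term needs δ ≠ 0.
  generalize G2c q = c
  generalize G2xi q = ξ
  field_simp
  ring

/-- f_q vanishes at the point (0, δ(q)) corresponding to the trivial representation. -/
theorem G2_f_trivial_point (q : ℝ) (hq : 0 < q) : G2f q 0 (G2del q) = 0 :=
  G2_f_trivial_point_general q
end

section
/- For every real number q > 0, the partial derivative of f_q with respect to α (which is constant, equal to (δ(c+2)c − ξ + c² + 1)/(2ξ)) equals −(1 + q² + 2q⁴ + q⁶ + q⁸)/(q + q³)², and this value is strictly negative. -/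
/-
f_q is affine in α, so its α-derivative is the coefficient (δ(c+2)c − ξ + c² + 1)/(2ξ), and
that coefficient is simplified by clearing denominators. The only denominator whose
nonvanishing is not evident is the factor 1 − q² + q⁶ − q⁸ + q¹⁰ − q¹⁴ + q¹⁶ of ξ, which is
Φ₁₅(q²) and hence positive.
-/

lemma cyclotomic_fifteen_pos (x : ℝ) : 0 < x ^ 8 - x ^ 7 + x ^ 5 - x ^ 4 + x ^ 3 - x + 1 := by
  nlinarith [sq_nonneg (x ^ 4 - x ^ 3), sq_nonneg (x ^ 3 - x), sq_nonneg (x ^ 2 - x),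
    sq_nonneg (x - 1), sq_nonneg (x ^ 4), sq_nonneg (x ^ 2), sq_nonneg x,
    sq_nonneg (x ^ 3 - x ^ 2), sq_nonneg (x ^ 4 - x ^ 2)]

lemma G2xi_numerator_pos (q : ℝ) :
    0 < 1 - q ^ 2 + q ^ 6 - q ^ 8 + q ^ 10 - q ^ 14 + q ^ 16 := by
  have h := cyclotomic_fifteen_pos (q ^ 2)
  ring_nf at h ⊢
  linarith

lemma G2_alpha_coeff_eq {q : ℝ} (hq : q ≠ 0) :
    (G2del q * (G2c q + 2) * G2c q - G2xi q + (G2c q) ^ 2 + 1) / (2 * G2xi q)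
      = -((1 + q ^ 2 + 2 * q ^ 4 + q ^ 6 + q ^ 8) / (q + q ^ 3) ^ 2) := by
  have hP := (G2xi_numerator_pos q).ne'
  have h4 : q ^ 4 + 1 / q ^ 4 ≠ 0 := by positivity
  have h8 : (1 : ℝ) + q ^ 8 ≠ 0 := by positivity
  have h13 : q + q ^ 3 ≠ 0 := by
    rw [show q + q ^ 3 = q * (1 + q ^ 2) by ring]
    positivity
  unfold G2del G2c G2xi
  field_simp
  ring

lemma hasDerivAt_G2f_alpha (q α t : ℝ) :
    HasDerivAt (fun a => G2f q a t)
      ((G2del q * (G2c q + 2) * G2c q - G2xi q + (G2c q) ^ 2 + 1) / (2 * G2xi q)) α := by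
  have hf : (fun a => G2f q a t) = fun a => a * ((G2del q * (G2c q + 2) * G2c q - G2xi q
      + (G2c q) ^ 2 + 1) / (2 * G2xi q)) + G2f q 0 t := by
    funext a
    unfold G2f
    ring
  rw [hf]
  simpa using ((hasDerivAt_id α).mul_const _).add_const (G2f q 0 t)

/-- The partial derivative of f_q in the α-direction is constant, equal to
(δ(c+2)c − ξ + c² + 1)/(2ξ) = −(1 + q² + 2q⁴ + q⁶ + q⁸)/(q + q³)², which is
strictly negative. -/
theorem G2_f_partial_alpha (q : ℝ) (hq : 0 < q) :
    (∀ α t : ℝ, HasDerivAt (fun a => G2f q a t)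
        (-((1 + q ^ 2 + 2 * q ^ 4 + q ^ 6 + q ^ 8) / (q + q ^ 3) ^ 2)) α)
      ∧ (G2del q * (G2c q + 2) * G2c q - G2xi q + (G2c q) ^ 2 + 1) / (2 * G2xi q)
          = -((1 + q ^ 2 + 2 * q ^ 4 + q ^ 6 + q ^ 8) / (q + q ^ 3) ^ 2)
      ∧ -((1 + q ^ 2 + 2 * q ^ 4 + q ^ 6 + q ^ 8) / (q + q ^ 3) ^ 2) < 0 := by
  have hcoeff := G2_alpha_coeff_eq hq.ne'
  refine ⟨fun α t => hcoeff ▸ hasDerivAt_G2f_alpha q α t, hcoeff, ?_⟩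
  exact neg_neg_of_pos (by positivity)
end

section
/- For every real number q > 0, the partial derivative of f_q with respect to t at the point (0, δ(q)), namely 2δ(q)·(δ(c² − 2c − 2) + ξ + c² − 2c − 1)/(−2δξ) + (δc + δ + c)/(−ξ), equals (q² − 1)²(1 + q² + q⁴)/q⁴; in particular it is strictly positive for all q > 0 with q ≠ 1, and it vanishes if and only if q = 1. -/
theorem cyclotomic15_sq_pos (x : ℝ) :
    0 < 1 - x ^ 2 + x ^ 6 - x ^ 8 + x ^ 10 - x ^ 14 + x ^ 16 := by
  nlinarith [sq_nonneg (x ^ 8 - x ^ 6 / 2), sq_nonneg (x ^ 6 - x ^ 4), sq_nonneg (x ^ 4 - x ^ 2 / 2),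
    sq_nonneg (x ^ 2 - 1 / 2), sq_nonneg (x ^ 8 - x ^ 4), sq_nonneg (x ^ 6 - x ^ 2)]

section

variable {q : ℝ}

theorem G2_partial_t_eq (hq : 0 < q) :
    2 * G2del q * (G2del q * ((G2c q) ^ 2 - 2 * G2c q - 2) + G2xi q + (G2c q) ^ 2
        - 2 * G2c q - 1) / (-2 * G2del q * G2xi q)
      + (G2del q * G2c q + G2del q + G2c q) / (-G2xi q)
      = (q ^ 2 - 1) ^ 2 * (1 + q ^ 2 + q ^ 4) / q ^ 4 := by
  have hΦ := (cyclotomic15_sq_pos q).ne'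
  unfold G2del G2c G2xi
  field_simp
  ring

theorem G2_partial_t_closed_form_pos (hq : 0 < q) (h1 : q ≠ 1) :
    0 < (q ^ 2 - 1) ^ 2 * (1 + q ^ 2 + q ^ 4) / q ^ 4 := by
  have : q ^ 2 - 1 ≠ 0 := fun h => h1 (by nlinarith)
  positivity

end

theorem hasDerivAt_quadratic (a b c d e f x : ℝ) :
    HasDerivAt (fun t => a + t ^ 2 * b / d - e + t * c / f) (2 * x * b / d + c / f) x :=
  (((((hasDerivAt_pow 2 x).mul_const b).div_const d).const_add a).sub_const e
    |>.add (((hasDerivAt_id x).mul_const c).div_const f)).congr_deriv (by ring)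

theorem hasDerivAt_G2f (q α t : ℝ) :
    HasDerivAt (fun t => G2f q α t)
      (2 * t * (G2del q * ((G2c q) ^ 2 - 2 * G2c q - 2) + G2xi q + (G2c q) ^ 2
          - 2 * G2c q - 1) / (-2 * G2del q * G2xi q)
        + (G2del q * G2c q + G2del q + G2c q) / (-G2xi q)) t :=
  hasDerivAt_quadratic _ _ _ _ _ _ t

/-- The partial derivative of f_q with respect to t at (0, δ(q)), namely
2δ·(δ(c²−2c−2)+ξ+c²−2c−1)/(−2δξ) + (δc+δ+c)/(−ξ), equals (q²−1)²(1+q²+q⁴)/q⁴;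
it is strictly positive for q ≠ 1 and vanishes iff q = 1. -/
theorem G2_f_partial_t_at_trivial (q : ℝ) (hq : 0 < q) :
    HasDerivAt (fun t => G2f q 0 t)
        (2 * G2del q * (G2del q * ((G2c q) ^ 2 - 2 * G2c q - 2) + G2xi q + (G2c q) ^ 2
            - 2 * G2c q - 1) / (-2 * G2del q * G2xi q)
          + (G2del q * G2c q + G2del q + G2c q) / (-G2xi q)) (G2del q)
      ∧ 2 * G2del q * (G2del q * ((G2c q) ^ 2 - 2 * G2c q - 2) + G2xi q + (G2c q) ^ 2
            - 2 * G2c q - 1) / (-2 * G2del q * G2xi q)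
          + (G2del q * G2c q + G2del q + G2c q) / (-G2xi q)
          = (q ^ 2 - 1) ^ 2 * (1 + q ^ 2 + q ^ 4) / q ^ 4
      ∧ (q ≠ 1 → 0 < (q ^ 2 - 1) ^ 2 * (1 + q ^ 2 + q ^ 4) / q ^ 4)
      ∧ ((q ^ 2 - 1) ^ 2 * (1 + q ^ 2 + q ^ 4) / q ^ 4 = 0 ↔ q = 1) := by
  refine ⟨hasDerivAt_G2f q 0 (G2del q), G2_partial_t_eq hq, G2_partial_t_closed_form_pos hq, ?_⟩
  constructor
  · intro h
    by_contra h1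
    exact (G2_partial_t_closed_form_pos hq h1).ne' h
  · rintro rfl
    norm_num
end

section
/- Let q > 0 be real, H = ℂ⁷ with standard orthonormal basis e₁, …, e₇, let w = (q⁻⁵, q⁻⁴, q⁻¹, 1, q, q⁴, q⁵), and define R ∈ H ⊗ H by R = Σ_{i=1}^{7} (−1)^{i+1} w_i · e_i ⊗ e_{8−i}, viewed as a linear map R : ℂ → H ⊗ H with adjoint R* : H ⊗ H → ℂ. Then (1_H ⊗ R*) ∘ (R ⊗ 1_H) = 1_H and (R* ⊗ 1_H) ∘ (1_H ⊗ R) = 1_H, and ‖R(1)‖² = Σ_{i=1}^{7} w_i² = q^{10} + q⁸ + q² + 1 + q⁻² + q⁻⁸ + q⁻¹⁰. -/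
/-!
R(1) is supported on the antidiagonal, with entry aᵢ = (−1)^{i+1} wᵢ at (i, 8−i). Both zigzag
composites therefore collapse to multiplication by conj(a_{8−i}) aᵢ, which is 1 because
w_{8−i} wᵢ = 1 and, the dimension 7 being odd, the two signs agree.
-/

open Complex

/-- The diagonal entries w = (q⁻⁵, q⁻⁴, q⁻¹, 1, q, q⁴, q⁵) of W = π(K_{2ρ})^{−1/2}. -/
noncomputable def G2w (q : ℝ) : Fin 7 → ℝ :=
  ![1 / q ^ 5, 1 / q ^ 4, 1 / q, 1, q, q ^ 4, q ^ 5]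

/-- The coefficients of the duality vector R(1) = Σᵢ (−1)^{i+1} wᵢ eᵢ ⊗ e_{8−i} ∈ H ⊗ H,
recorded via the identification of H ⊗ H with ℂ^{7×7}: the (i,j) entry is
(−1)^{i+1} wᵢ if j = 8 − i and 0 otherwise (indices here are 0-based, so 8 − i is
`Fin.rev`). -/
noncomputable def G2R (q : ℝ) : Fin 7 × Fin 7 → ℂ :=
  fun p => if p.2 = p.1.rev then ((-1 : ℂ) ^ (p.1 : ℕ) * (G2w q p.1 : ℂ)) else 0

/-- The map R ⊗ 1_H : H → H ⊗ H ⊗ H, with tensor powers of H = ℂ⁷ identified with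
functions on products of `Fin 7`. -/
noncomputable def G2RtensorId (q : ℝ) (x : Fin 7 → ℂ) : Fin 7 × Fin 7 × Fin 7 → ℂ :=
  fun p => G2R q (p.1, p.2.1) * x p.2.2

/-- The map 1_H ⊗ R* : H ⊗ H ⊗ H → H, where R* is the Hilbert space adjoint of R. -/
noncomputable def G2IdtensorRstar (q : ℝ) (y : Fin 7 × Fin 7 × Fin 7 → ℂ) : Fin 7 → ℂ :=
  fun i => ∑ j : Fin 7, ∑ k : Fin 7, (starRingEnd ℂ) (G2R q (j, k)) * y (i, j, k)

/-- The map 1_H ⊗ R : H → H ⊗ H ⊗ H. -/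
noncomputable def G2IdtensorR (q : ℝ) (x : Fin 7 → ℂ) : Fin 7 × Fin 7 × Fin 7 → ℂ :=
  fun p => x p.1 * G2R q (p.2.1, p.2.2)

/-- The map R* ⊗ 1_H : H ⊗ H ⊗ H → H. -/
noncomputable def G2RstartensorId (q : ℝ) (y : Fin 7 × Fin 7 × Fin 7 → ℂ) : Fin 7 → ℂ :=
  fun k => ∑ i : Fin 7, ∑ j : Fin 7, (starRingEnd ℂ) (G2R q (i, j)) * y (i, j, k)

open ComplexConjugate

section Antidiagonal
variable {n : ℕ}

def antidiagTensor (a : Fin n → ℂ) : Fin n × Fin n → ℂ :=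
  fun p => if p.2 = p.1.rev then a p.1 else 0

variable (a : Fin n → ℂ)

@[simp]
theorem antidiagTensor_apply_rev (i : Fin n) : antidiagTensor a (i, i.rev) = a i := if_pos rfl

@[simp]
theorem antidiagTensor_rev_apply (i : Fin n) : antidiagTensor a (i.rev, i) = a i.rev :=
  if_pos (Fin.rev_rev i).symm

theorem antidiagTensor_of_ne_rev {i j : Fin n} (h : j ≠ i.rev) : antidiagTensor a (i, j) = 0 :=
  if_neg h

theorem sum_conj_antidiagTensor_mul (j : Fin n) (f : Fin n → ℂ) :
    ∑ k, conj (antidiagTensor a (j, k)) * f k = conj (a j) * f j.rev := by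
  rw [Fintype.sum_eq_single j.rev fun k hk => by
      rw [antidiagTensor_of_ne_rev a hk, map_zero, zero_mul],
    antidiagTensor_apply_rev]

theorem sum_norm_antidiagTensor_sq : ∑ p, ‖antidiagTensor a p‖ ^ 2 = ∑ i, ‖a i‖ ^ 2 := by
  rw [Fintype.sum_prod_type]
  refine Finset.sum_congr rfl fun i _ => ?_
  rw [Fintype.sum_eq_single i.rev fun j hj => by
      rw [antidiagTensor_of_ne_rev a hj, norm_zero, sq, zero_mul],
    antidiagTensor_apply_rev]

variable {a}

theorem antidiagTensor_zigzag_left (ha : ∀ i, conj (a i.rev) * a i = 1) (x : Fin n → ℂ)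
    (i : Fin n) :
    ∑ j, ∑ k, conj (antidiagTensor a (j, k)) * (antidiagTensor a (i, j) * x k) = x i := by
  simp_rw [sum_conj_antidiagTensor_mul]
  rw [Fintype.sum_eq_single i.rev fun j hj => by
      rw [antidiagTensor_of_ne_rev a hj, zero_mul, mul_zero],
    antidiagTensor_apply_rev, Fin.rev_rev, ← mul_assoc, ha, one_mul]

theorem antidiagTensor_zigzag_right (ha : ∀ i, conj (a i.rev) * a i = 1) (x : Fin n → ℂ)
    (k : Fin n) :
    ∑ i, ∑ j, conj (antidiagTensor a (i, j)) * (x i * antidiagTensor a (j, k)) = x k := by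
  simp_rw [sum_conj_antidiagTensor_mul]
  rw [Fintype.sum_eq_single k fun i hi => by
      rw [antidiagTensor_of_ne_rev a (by rwa [Fin.rev_rev, ne_comm]), mul_zero, mul_zero]]
  rw [antidiagTensor_rev_apply, mul_left_comm,
    show conj (a k) * a k.rev = 1 by simpa using ha k.rev, mul_one]

theorem conj_signed_rev_mul_signed_eq_one (hn : Odd n) {w : Fin n → ℝ}
    (hw : ∀ i, w i.rev * w i = 1) (i : Fin n) :
    conj ((-1 : ℂ) ^ (i.rev : ℕ) * w i.rev) * ((-1) ^ (i : ℕ) * w i) = 1 := by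
  have hsign : (-1 : ℂ) ^ (i.rev : ℕ) * (-1) ^ (i : ℕ) = 1 := by
    obtain ⟨m, rfl⟩ := hn
    rw [← pow_add, Fin.val_rev, show 2 * m + 1 - (i + 1) + i = 2 * m by omega, pow_mul]
    norm_num
  rw [map_mul, map_pow, map_neg, map_one, conj_ofReal, mul_mul_mul_comm, hsign, ← ofReal_mul, hw,
    ofReal_one, one_mul]

end Antidiagonal

theorem G2w_rev_mul {q : ℝ} (hq : q ≠ 0) (i : Fin 7) : G2w q i.rev * G2w q i = 1 := by
  fin_cases i <;> simp [G2w, Fin.rev, hq]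

theorem sum_G2w_sq {q : ℝ} (hq : q ≠ 0) :
    ∑ i, G2w q i ^ 2 = q ^ 10 + q ^ 8 + q ^ 2 + 1 + 1 / q ^ 2 + 1 / q ^ 8 + 1 / q ^ 10 := by
  simp only [Fin.sum_univ_seven, G2w, Matrix.cons_val]
  field_simp
  ring

/-- The pair (R, R*) solves the conjugate equations for the fundamental 7-dimensional
representation of U_q(𝔤₂), and ‖R(1)‖² = Σ wᵢ² = δ(q). -/
theorem G2_conjugate_equations (q : ℝ) (hq : 0 < q) :
    (∀ x : Fin 7 → ℂ, G2IdtensorRstar q (G2RtensorId q x) = x)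
      ∧ (∀ x : Fin 7 → ℂ, G2RstartensorId q (G2IdtensorR q x) = x)
      ∧ ∑ p : Fin 7 × Fin 7, ‖G2R q p‖ ^ 2 = ∑ i : Fin 7, (G2w q i) ^ 2
      ∧ ∑ i : Fin 7, (G2w q i) ^ 2
          = q ^ 10 + q ^ 8 + q ^ 2 + 1 + 1 / q ^ 2 + 1 / q ^ 8 + 1 / q ^ 10 := by
  have hR : G2R q = antidiagTensor fun i => (-1 : ℂ) ^ (i : ℕ) * G2w q i := rfl
  have hcoeff := conj_signed_rev_mul_signed_eq_one (by decide) (G2w_rev_mul hq.ne')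
  refine ⟨fun x => funext fun i => ?_, fun x => funext fun k => ?_, ?_, sum_G2w_sq hq.ne'⟩
  · simp only [G2IdtensorRstar, G2RtensorId, hR]
    exact antidiagTensor_zigzag_left hcoeff x i
  · simp only [G2RstartensorId, G2IdtensorR, hR]
    exact antidiagTensor_zigzag_right hcoeff x k
  · rw [hR, sum_norm_antidiagTensor_sq]
    simp
end
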